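/- Let ε, k > 0 satisfy k ≤ ε². Under the admissibility assumptions on u, v, w, the map t ↦ E(u + t·v; w) is convex on ℝ. -/

import Mathlib

open MeasureTheory

/-- The double-well potential `F(s) = (1/4)(s² − 1)²`. -/
noncomputable def dwF (s : ℝ) : ℝ := (1 / 4) * (s ^ 2 - 1) ^ 2

/-- Its derivative `f(s) = s³ − s`. -/
noncomputable def dwf (s : ℝ) : ℝ := s ^ 3 - s

/-- The Ginzburg–Landau energy `J_ε(z) = ∫_Ω ((1/2)|∇z|² + (1/ε²)F(z))`. -/
noncomputable def GLJ {d : ℕ} (Ω : Set (EuclideanSpace ℝ (Fin d))) (ε : ℝ)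
    (z : EuclideanSpace ℝ (Fin d) → ℝ) : ℝ :=
  ∫ x in Ω, ((1 / 2) * ‖gradient z x‖ ^ 2 + (1 / ε ^ 2) * dwF (z x))

/-- The discrete energy `E(z; w) = J_ε(z) + (1/(2k)) ∫_Ω (z − w)²`. -/
noncomputable def discE {d : ℕ} (Ω : Set (EuclideanSpace ℝ (Fin d))) (ε k : ℝ)
    (z w : EuclideanSpace ℝ (Fin d) → ℝ) : ℝ :=
  GLJ Ω ε z + (1 / (2 * k)) * ∫ x in Ω, (z x - w x) ^ 2

/-! Along the line `z = u + t v` the integrand of `E` is, at each point, the sum of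
`(1/2)‖∇u + t ∇v‖²`, convex in `t`, and `g (u + t v)` with
`g s = F(s)/ε² + (s - w)²/(2k) = s⁴/(4ε²) + (1/(2k) - 1/(2ε²)) s² + (affine in s)`,
which is convex because `k ≤ ε²`. Integration preserves convexity; every integrand is a
continuous function of bounded measurable data on a set of finite measure, hence integrable. -/

open Set

lemma ConvexOn.integral {α E : Type*} [MeasurableSpace α] [AddCommGroup E] [Module ℝ E]
    {μ : Measure α} {s : Set E} {Φ : E → α → ℝ} (hs : Convex ℝ s)
    (hconv : ∀ x, ConvexOn ℝ s (Φ · x)) (hint : ∀ t ∈ s, Integrable (Φ t) μ) :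
    ConvexOn ℝ s (fun t => ∫ x, Φ t x ∂μ) := by
  refine ⟨hs, fun p hp q hq a b ha hb hab => ?_⟩
  have hp' : Integrable (fun x => a • Φ p x) μ := (hint p hp).smul a
  have hq' : Integrable (fun x => b • Φ q x) μ := (hint q hq).smul b
  calc ∫ x, Φ (a • p + b • q) x ∂μ
      ≤ ∫ x, (a • Φ p x + b • Φ q x) ∂μ :=
        integral_mono (hint _ (hs hp hq ha hb hab)) (hp'.add hq')
          fun x => (hconv x).2 hp hq ha hb hab
    _ = a • ∫ x, Φ p x ∂μ + b • ∫ x, Φ q x ∂μ := by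
        rw [integral_add hp' hq', integral_smul, integral_smul]

lemma ConvexOn.comp_line {E : Type*} [AddCommGroup E] [Module ℝ E] {f : E → ℝ}
    (hf : ConvexOn ℝ univ f) (a b : E) : ConvexOn ℝ univ (fun t : ℝ => f (a + t • b)) := by
  refine ⟨convex_univ, fun p _ q _ α β hα hβ hαβ => ?_⟩
  have hline : a + (α • p + β • q) • b = α • (a + p • b) + β • (a + q • b) := by
    conv_lhs => rw [← one_smul ℝ a, ← hαβ]
    module
  dsimp only
  rw [hline]
  exact hf.2 (mem_univ _) (mem_univ _) hα hβ hαβ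

lemma integrableOn_comp_of_bounded {α V : Type*} [MeasurableSpace α] [NormedAddCommGroup V]
    [ProperSpace V] {μ : Measure α} {s : Set α} (hs : MeasurableSet s) (hμs : μ s ≠ ⊤)
    {g : α → V} (hg : AEStronglyMeasurable g μ) (hgb : ∃ C, ∀ x ∈ s, ‖g x‖ ≤ C)
    {P : V → ℝ} (hP : Continuous P) : IntegrableOn (P ∘ g) s μ := by
  obtain ⟨C, hC⟩ := hgb
  obtain ⟨M, hM⟩ :=
    (isCompact_closedBall (0 : V) C).exists_bound_of_continuousOn hP.continuousOn
  refine Measure.integrableOn_of_bounded hμs (hP.comp_aestronglyMeasurable hg) (M := M) ?_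
  filter_upwards [ae_restrict_mem hs] with x hx
  exact hM _ (mem_closedBall_zero_iff.2 (hC x hx))

lemma exists_norm_prodMk_le {α V W : Type*} [SeminormedAddCommGroup V] [SeminormedAddCommGroup W]
    {s : Set α} {f : α → V} {g : α → W} (hf : ∃ C, ∀ x ∈ s, ‖f x‖ ≤ C)
    (hg : ∃ C, ∀ x ∈ s, ‖g x‖ ≤ C) : ∃ C, ∀ x ∈ s, ‖(f x, g x)‖ ≤ C := by
  obtain ⟨C₁, hC₁⟩ := hf
  obtain ⟨C₂, hC₂⟩ := hg
  exact ⟨max C₁ C₂, fun x hx => norm_prod_le_iff.2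
    ⟨(hC₁ x hx).trans (le_max_left _ _), (hC₂ x hx).trans (le_max_right _ _)⟩⟩

@[fun_prop]
lemma continuous_dwF : Continuous dwF := by
  unfold dwF
  fun_prop

lemma convexOn_dwF_add_sq {ε k : ℝ} (hk : 0 < k) (hcond : k ≤ ε ^ 2) (W : ℝ) :
    ConvexOn ℝ univ (fun s : ℝ => (1 / ε ^ 2) * dwF s + (1 / (2 * k)) * (s - W) ^ 2) := by
  have hquad : 0 ≤ 1 / (2 * k) - 1 / (2 * ε ^ 2) := by
    rw [sub_nonneg]
    gcongr
  have hlin :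
      ConvexOn ℝ univ (fun s : ℝ => (-W / k) * s + (1 / (4 * ε ^ 2) + W ^ 2 / (2 * k))) :=
    (LinearMap.mul ℝ ℝ (-W / k)).convexOn convex_univ |>.add_const _
  have hexpand : (fun s : ℝ => (1 / ε ^ 2) * dwF s + (1 / (2 * k)) * (s - W) ^ 2)
      = fun s : ℝ => (1 / (4 * ε ^ 2)) * s ^ 4
          + ((1 / (2 * k) - 1 / (2 * ε ^ 2)) * s ^ 2
          + ((-W / k) * s + (1 / (4 * ε ^ 2) + W ^ 2 / (2 * k)))) := by
    have : ε ^ 2 ≠ 0 := (hk.trans_le hcond).ne'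
    funext s
    unfold dwF
    field_simp
    ring
  rw [hexpand]
  exact ((by decide : Even 4).convexOn_pow.smul (by positivity)).add
    ((even_two.convexOn_pow.smul hquad).add hlin)

noncomputable def discEDensity {E : Type*} [Norm E] (ε k : ℝ) (g : E) (z w : ℝ) : ℝ :=
  (1 / 2) * ‖g‖ ^ 2 + (1 / ε ^ 2) * dwF z + (1 / (2 * k)) * (z - w) ^ 2

lemma convexOn_discEDensity_line {E : Type*} [NormedAddCommGroup E] [InnerProductSpace ℝ E]
    {ε k : ℝ} (hk : 0 < k) (hcond : k ≤ ε ^ 2) (a b : E) (z₀ z₁ w : ℝ) :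
    ConvexOn ℝ univ (fun t : ℝ => discEDensity ε k (a + t • b) (z₀ + t * z₁) w) := by
  have hgrad := ((convexOn_univ_norm.pow (fun _ _ => norm_nonneg _) 2).comp_line a b).smul
    (by norm_num : (0 : ℝ) ≤ 1 / 2)
  have hpot := (convexOn_dwF_add_sq hk hcond w).comp_line z₀ z₁
  refine (hgrad.add hpot).congr fun t _ => ?_
  simp only [discEDensity, Pi.add_apply, Pi.pow_apply, smul_eq_mul]
  ring

lemma discE_eq_setIntegral_discEDensity {d : ℕ} {Ω : Set (EuclideanSpace ℝ (Fin d))}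
    {ε k : ℝ} {z w : EuclideanSpace ℝ (Fin d) → ℝ}
    {G : EuclideanSpace ℝ (Fin d) → EuclideanSpace ℝ (Fin d)}
    (hG : gradient z = G)
    (hJ : IntegrableOn (fun x => (1 / 2) * ‖G x‖ ^ 2 + (1 / ε ^ 2) * dwF (z x)) Ω)
    (hP : IntegrableOn (fun x => (z x - w x) ^ 2) Ω) :
    discE Ω ε k z w = ∫ x in Ω, discEDensity ε k (G x) (z x) (w x) := by
  subst hG
  rw [discE, GLJ, ← integral_const_mul, ← integral_add hJ (hP.const_mul _)]
  rfl

lemma gradient_add_const_mul {F : Type*} [NormedAddCommGroup F] [InnerProductSpace ℝ F]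
    [CompleteSpace F] {u v : F → ℝ} {x : F} (hu : DifferentiableAt ℝ u x)
    (hv : DifferentiableAt ℝ v x) (t : ℝ) :
    gradient (fun y => u y + t * v y) x = gradient u x + t • gradient v x := by
  have hderiv : HasFDerivAt (fun y => u y + t * v y) (fderiv ℝ u x + t • fderiv ℝ v x) x :=
    hu.hasFDerivAt.add (hv.hasFDerivAt.const_mul t)
  rw [hderiv.hasGradientAt.gradient]
  simp only [gradient, map_add, map_smul]

theorem convexity_of_discrete_energy_along_line_general
    (d : ℕ)
    (Ω : Set (EuclideanSpace ℝ (Fin d))) (hΩ : MeasurableSet Ω)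
    (hΩfin : volume Ω < ⊤)
    (ε k : ℝ) (hk : 0 < k) (hcond : k ≤ ε ^ 2)
    (u v w : EuclideanSpace ℝ (Fin d) → ℝ)
    (hu : Differentiable ℝ u) (hv : Differentiable ℝ v)
    (hum : Measurable u) (hvm : Measurable v) (hwm : Measurable w)
    (hgum : Measurable fun x => gradient u x)
    (hgvm : Measurable fun x => gradient v x)
    (hub : ∃ C, ∀ x ∈ Ω, |u x| ≤ C) (hvb : ∃ C, ∀ x ∈ Ω, |v x| ≤ C)
    (hwb : ∃ C, ∀ x ∈ Ω, |w x| ≤ C)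
    (hgub : ∃ C, ∀ x ∈ Ω, ‖gradient u x‖ ≤ C)
    (hgvb : ∃ C, ∀ x ∈ Ω, ‖gradient v x‖ ≤ C) :
    ConvexOn ℝ Set.univ
      (fun t : ℝ => discE Ω ε k (fun x => u x + t * v x) w) := by
  set D := fun x => (gradient u x, gradient v x, u x, v x, w x)
  have hD_meas : AEStronglyMeasurable D volume :=
    (hgum.prodMk (hgvm.prodMk (hum.prodMk (hvm.prodMk hwm)))).aestronglyMeasurable
  have hD_bdd : ∃ C, ∀ x ∈ Ω, ‖D x‖ ≤ C := by
    simp only [← Real.norm_eq_abs] at hub hvb hwb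
    exact exists_norm_prodMk_le hgub (exists_norm_prodMk_le hgvb
      (exists_norm_prodMk_le hub (exists_norm_prodMk_le hvb hwb)))
  have hint : ∀ P, Continuous P → IntegrableOn (P ∘ D) Ω := fun P hP =>
    integrableOn_comp_of_bounded hΩ hΩfin.ne hD_meas hD_bdd hP
  have hE : ∀ t : ℝ, discE Ω ε k (fun x => u x + t * v x) w = ∫ x in Ω,
      discEDensity ε k (gradient u x + t • gradient v x) (u x + t * v x) (w x) := by
    intro t
    have hgrad : gradient (fun y => u y + t * v y) = fun x => gradient u x + t • gradient v x :=
      funext fun x => gradient_add_const_mul (hu x) (hv x) t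
    refine discE_eq_setIntegral_discEDensity hgrad ?_ ?_
    · exact hint (fun p => (1 / 2) * ‖p.1 + t • p.2.1‖ ^ 2
        + (1 / ε ^ 2) * dwF (p.2.2.1 + t * p.2.2.2.1)) (by fun_prop)
    · exact hint (fun p => (p.2.2.1 + t * p.2.2.2.1 - p.2.2.2.2) ^ 2) (by fun_prop)
  simp only [hE]
  refine ConvexOn.integral convex_univ
    (fun x => convexOn_discEDensity_line hk hcond _ _ _ _ _) (fun t _ => ?_)
  exact hint (fun p => discEDensity ε k (p.1 + t • p.2.1) (p.2.2.1 + t * p.2.2.2.1) p.2.2.2.2)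
    (by unfold discEDensity; fun_prop)

theorem convexity_of_discrete_energy_along_line
    (d : ℕ) (hd : 1 ≤ d)
    (Ω : Set (EuclideanSpace ℝ (Fin d))) (hΩ : MeasurableSet Ω)
    (hΩfin : volume Ω < ⊤)
    (ε k : ℝ) (hε : 0 < ε) (hk : 0 < k) (hcond : k ≤ ε ^ 2)
    (u v w : EuclideanSpace ℝ (Fin d) → ℝ)
    (hu : Differentiable ℝ u) (hv : Differentiable ℝ v)
    (hum : Measurable u) (hvm : Measurable v) (hwm : Measurable w)
    (hgum : Measurable fun x => gradient u x)
    (hgvm : Measurable fun x => gradient v x)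
    (hub : ∃ C, ∀ x ∈ Ω, |u x| ≤ C) (hvb : ∃ C, ∀ x ∈ Ω, |v x| ≤ C)
    (hwb : ∃ C, ∀ x ∈ Ω, |w x| ≤ C)
    (hgub : ∃ C, ∀ x ∈ Ω, ‖gradient u x‖ ≤ C)
    (hgvb : ∃ C, ∀ x ∈ Ω, ‖gradient v x‖ ≤ C) :
    ConvexOn ℝ Set.univ
      (fun t : ℝ => discE Ω ε k (fun x => u x + t * v x) w) :=
  convexity_of_discrete_energy_along_line_general d Ω hΩ hΩfin ε k hk hcond u v w hu hv hum hvm hwm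
    hgum hgvm hub hvb hwb hgub hgvb
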